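/- arXiv:2203.15305 — 2 statements merged into one kernel-verified Lean document; each statement's English description precedes it below -/
import Mathlib

section
/- Exponential tracking of the gradient prediction-correction flow: assume f_u(y, t) is twice continuously differentiable, strongly convex in y with ∇_yy f_u ≽ q_c·I uniformly, and y(t) evolves according to ẏ = -γ ∇_y f_u(y,t) - (∇_yy f_u(y,t))⁻¹ ∇_yt f_u(y,t) with γ > 0. Then the residual σ(t) = ∇_y f_u(y(t), t) satisfies ‖σ(t)‖ ≤ ‖σ(t₀)‖ e^{-q_c γ (t-t₀)}, and hence ‖y(t) - y*(t)‖ ≤ (‖σ(t₀)‖/q_c) e^{-q_c γ (t-t₀)}, where y*(t) is the (unique) minimizer of f_u(·, t). -/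
open scoped RealInnerProductSpace

/-!
Along the flow, the chain rule gives `σ' = ∇_yy f · ẏ + ∇_yt f`, and the prediction term
`-(∇_yy f)⁻¹ ∇_yt f` of `ẏ` cancels `∇_yt f`, leaving `σ' = -γ ∇_yy f σ`. Strong convexity then
gives `d/dt ‖σ‖² ≤ -2 q_c γ ‖σ‖²`, so `‖σ‖` decays at rate `q_c γ`. Finally, the mean value
theorem along the segment from `y*` to `y` shows that `∇_y f` is `q_c`-strongly monotone,
whence `q_c ‖y - y*‖ ≤ ‖σ - ∇_y f(y*)‖ = ‖σ‖`.
-/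

section PartialDerivatives

variable {𝕜 E V : Type*} [NontriviallyNormedField 𝕜]
  [NormedAddCommGroup E] [NormedSpace 𝕜 E] [NormedAddCommGroup V] [NormedSpace 𝕜 V]

theorem DifferentiableAt.hasDerivAt_comp_prodMk {Φ : E × 𝕜 → V} {A : E →L[𝕜] V}
    {b : V} {v : E} {t : 𝕜} {y : 𝕜 → E}
    (hΦ : DifferentiableAt 𝕜 Φ (y t, t)) (hA : HasFDerivAt (fun z => Φ (z, t)) A (y t))
    (hb : HasDerivAt (fun s => Φ (y t, s)) b t) (hy : HasDerivAt y v t) :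
    HasDerivAt (fun s => Φ (y s, s)) (A v + b) t := by
  have hΦ' := hΦ.hasFDerivAt
  have hA' : (fderiv 𝕜 Φ (y t, t)).comp (.inl 𝕜 E 𝕜) = A :=
    (hΦ'.comp (y t) (hasFDerivAt_prodMk_left (y t) t)).unique hA
  have hb' : fderiv 𝕜 Φ (y t, t) (0, 1) = b :=
    (hΦ'.comp_hasDerivAt t ((hasDerivAt_const t (y t)).prodMk (hasDerivAt_id t))).unique hb
  have hvec : ((v, 1) : E × 𝕜) = (v, 0) + (0, 1) := by simp
  rw [← hA', ← hb', ContinuousLinearMap.comp_apply, ContinuousLinearMap.inl_apply, ← map_add,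
    ← hvec]
  exact hΦ'.comp_hasDerivAt (f := fun s => (y s, s)) t (hy.prodMk (hasDerivAt_id t))

end PartialDerivatives

section Gradient

variable {E G : Type*} [NormedAddCommGroup E] [InnerProductSpace ℝ E] [CompleteSpace E]
  [NormedAddCommGroup G] [NormedSpace ℝ G]

theorem ContDiff.gradient_left {F : E → G → ℝ} {n : WithTop ℕ∞}
    (hF : ContDiff ℝ (n + 1) (fun p : E × G => F p.1 p.2)) :
    ContDiff ℝ n (fun p : E × G => gradient (fun w => F w p.2) p.1) := by
  have hpartial : ∀ p : E × G, fderiv ℝ (fun w => F w p.2) p.1 =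
      (fderiv ℝ (fun q : E × G => F q.1 q.2) p).comp (.inl ℝ E G) := fun p =>
    (((hF.differentiable (by simp)) p).hasFDerivAt.comp (f := fun w => (w, p.2)) p.1
      (hasFDerivAt_prodMk_left p.1 p.2)).fderiv
  simp only [gradient, hpartial]
  exact (InnerProductSpace.toDual ℝ E).symm.contDiff.comp
    ((ContinuousLinearMap.compL ℝ E (E × G) ℝ).flip (.inl ℝ E G) |>.contDiff.comp
      (hF.fderiv_right le_rfl))

end Gradient

section StrongMonotonicity

variable {E : Type*} [NormedAddCommGroup E] [InnerProductSpace ℝ E]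

theorem mul_norm_sub_sq_le_inner_of_hasFDerivAt {Ψ : E → E} {H : E → E →L[ℝ] E} {q : ℝ}
    (hΨ : ∀ z, HasFDerivAt Ψ (H z) z) (hH : ∀ z v, q * ‖v‖ ^ 2 ≤ ⟪H z v, v⟫) (x x' : E) :
    q * ‖x - x'‖ ^ 2 ≤ ⟪Ψ x - Ψ x', x - x'⟫ := by
  set d := x - x'
  have hline : ∀ s : ℝ, HasDerivAt (fun s : ℝ => x' + s • d) d s := fun s => by
    simpa using ((hasDerivAt_id s).smul_const d).const_add x'
  have hderiv : ∀ s : ℝ, HasDerivAt (fun s => ⟪Ψ (x' + s • d), d⟫) ⟪H (x' + s • d) d, d⟫ s :=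
    fun s => by
      simpa using ((hΨ _).comp_hasDerivAt s (hline s)).inner ℝ (hasDerivAt_const s d)
  obtain ⟨c, -, hc⟩ := exists_hasDerivAt_eq_slope _ _ zero_lt_one
    (fun s _ => (hderiv s).continuousAt.continuousWithinAt) (fun s _ => hderiv s)
  have hx : x' + (1 : ℝ) • d = x := by simp [d]
  calc q * ‖d‖ ^ 2 ≤ ⟪H (x' + c • d) d, d⟫ := hH _ _
    _ = ⟪Ψ x - Ψ x', d⟫ := by rw [hc, hx, inner_sub_left]; simp

theorem mul_norm_sub_le_norm_sub_of_hasFDerivAt {Ψ : E → E} {H : E → E →L[ℝ] E} {q : ℝ}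
    (hΨ : ∀ z, HasFDerivAt Ψ (H z) z) (hH : ∀ z v, q * ‖v‖ ^ 2 ≤ ⟪H z v, v⟫) (x x' : E) :
    q * ‖x - x'‖ ≤ ‖Ψ x - Ψ x'‖ := by
  rcases (norm_nonneg (x - x')).eq_or_lt with hd | hd
  · rw [← hd, mul_zero]
    exact norm_nonneg _
  refine le_of_mul_le_mul_right ?_ hd
  calc q * ‖x - x'‖ * ‖x - x'‖ = q * ‖x - x'‖ ^ 2 := by ring
    _ ≤ ⟪Ψ x - Ψ x', x - x'⟫ := mul_norm_sub_sq_le_inner_of_hasFDerivAt hΨ hH x x'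
    _ ≤ ‖Ψ x - Ψ x'‖ * ‖x - x'‖ := real_inner_le_norm _ _

end StrongMonotonicity

section Decay

open Real

theorem le_mul_exp_of_hasDerivAt_le {φ φ' : ℝ → ℝ} {k t₀ t : ℝ}
    (hφ : ∀ s, HasDerivAt φ (φ' s) s) (hle : ∀ s, φ' s ≤ -k * φ s) (ht : t₀ ≤ t) :
    φ t ≤ φ t₀ * exp (-k * (t - t₀)) := by
  have hexp : ∀ s, HasDerivAt (fun s => exp (k * (s - t₀))) (exp (k * (s - t₀)) * k) s :=
    fun s => by simpa using (((hasDerivAt_id s).sub_const t₀).const_mul k).exp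
  have hanti : Antitone fun s => exp (k * (s - t₀)) * φ s :=
    antitone_of_hasDerivAt_nonpos (fun s => (hexp s).mul (hφ s)) fun s => by
      rw [Pi.zero_apply]
      nlinarith [hle s, exp_pos (k * (s - t₀))]
  have h := hanti ht
  simp only [sub_self, mul_zero, exp_zero, one_mul] at h
  calc φ t = exp (-k * (t - t₀)) * (exp (k * (t - t₀)) * φ t) := by
        rw [← mul_assoc, ← exp_add]; ring_nf; simp
    _ ≤ exp (-k * (t - t₀)) * φ t₀ := by gcongr
    _ = φ t₀ * exp (-k * (t - t₀)) := mul_comm _ _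

variable {E : Type*} [NormedAddCommGroup E] [InnerProductSpace ℝ E]

theorem norm_le_mul_exp_of_inner_deriv_le {σ σ' : ℝ → E} {c t₀ t : ℝ}
    (hσ : ∀ s, HasDerivAt σ (σ' s) s) (hle : ∀ s, ⟪σ' s, σ s⟫ ≤ -c * ‖σ s‖ ^ 2)
    (ht : t₀ ≤ t) :
    ‖σ t‖ ≤ ‖σ t₀‖ * exp (-c * (t - t₀)) := by
  have hsq : ‖σ t‖ ^ 2 ≤ ‖σ t₀‖ ^ 2 * exp (-(2 * c) * (t - t₀)) :=
    le_mul_exp_of_hasDerivAt_le (fun s => (hσ s).norm_sq)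
      (fun s => by rw [real_inner_comm]; linarith [hle s]) ht
  refine (sq_le_sq₀ (norm_nonneg _) (by positivity)).1 (hsq.trans_eq ?_)
  rw [mul_pow, ← exp_nat_mul]
  congr 2
  push_cast
  ring

end Decay

/-- Exponential tracking of the gradient prediction-correction flow (Theorem 1,
gradient case): along `ẏ = -γ∇_y f_u - (∇_yy f_u)⁻¹ ∇_yt f_u`, the residual
`σ(t) = ∇_y f_u(y(t), t)` decays like `e^{-q_c γ (t - t₀)}`, and
`‖y(t) - y*(t)‖ ≤ (‖σ(t₀)‖/q_c) e^{-q_c γ (t - t₀)}`. -/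
theorem gradient_prediction_correction_tracking (m : ℕ) (t0 γ qc : ℝ)
    (hγ : 0 < γ) (hqc : 0 < qc)
    (F : EuclideanSpace ℝ (Fin m) → ℝ → ℝ)
    (hF : ContDiff ℝ 2 (fun p : EuclideanSpace ℝ (Fin m) × ℝ => F p.1 p.2))
    (Hyy : EuclideanSpace ℝ (Fin m) → ℝ →
      (EuclideanSpace ℝ (Fin m) →L[ℝ] EuclideanSpace ℝ (Fin m)))
    (Hyt : EuclideanSpace ℝ (Fin m) → ℝ → EuclideanSpace ℝ (Fin m))
    (hHyy : ∀ y t, HasFDerivAt (fun z => gradient (fun w => F w t) z) (Hyy y t) y)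
    (hHyt : ∀ y t, HasDerivAt (fun s => gradient (fun w => F w s) y) (Hyt y t) t)
    (hstrong : ∀ y t (v : EuclideanSpace ℝ (Fin m)),
      qc * ‖v‖ ^ 2 ≤ ⟪Hyy y t v, v⟫)
    (Hinv : EuclideanSpace ℝ (Fin m) → ℝ →
      (EuclideanSpace ℝ (Fin m) →L[ℝ] EuclideanSpace ℝ (Fin m)))
    (hHinv : ∀ y t, (Hinv y t).comp (Hyy y t) = ContinuousLinearMap.id ℝ _ ∧
      (Hyy y t).comp (Hinv y t) = ContinuousLinearMap.id ℝ _)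
    (y : ℝ → EuclideanSpace ℝ (Fin m))
    (hdyn : ∀ t, HasDerivAt y
      (-(γ • gradient (fun w => F w t) (y t)) - Hinv (y t) t (Hyt (y t) t)) t)
    (ystar : ℝ → EuclideanSpace ℝ (Fin m))
    (hystar : ∀ t, gradient (fun w => F w t) (ystar t) = 0) :
    ∀ t, t0 ≤ t →
      ‖gradient (fun w => F w t) (y t)‖ ≤
        ‖gradient (fun w => F w t0) (y t0)‖ * Real.exp (-qc * γ * (t - t0)) ∧
      ‖y t - ystar t‖ ≤
        (‖gradient (fun w => F w t0) (y t0)‖ / qc) *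
          Real.exp (-qc * γ * (t - t0)) := by
  set σ : ℝ → EuclideanSpace ℝ (Fin m) := fun t => gradient (fun w => F w t) (y t)
  have hσ' : ∀ t, HasDerivAt σ (-(γ • Hyy (y t) t (σ t))) t := fun t => by
    have hΦ := (ContDiff.gradient_left (n := 1) hF).differentiable one_ne_zero (y t, t)
    have h := hΦ.hasDerivAt_comp_prodMk (hHyy (y t) t) (hHyt (y t) t) (hdyn t)
    have hcancel : Hyy (y t) t (Hinv (y t) t (Hyt (y t) t)) = Hyt (y t) t :=
      congrArg (· (Hyt (y t) t)) (hHinv (y t) t).2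
    rwa [map_sub, map_neg, map_smul, hcancel, sub_add_cancel] at h
  have hdecay : ∀ t, t0 ≤ t → ‖σ t‖ ≤ ‖σ t0‖ * Real.exp (-qc * γ * (t - t0)) := by
    intro t ht
    rw [neg_mul]
    refine norm_le_mul_exp_of_inner_deriv_le hσ' (fun s => ?_) ht
    rw [inner_neg_left, real_inner_smul_left]
    nlinarith [hstrong (y s) s (σ s)]
  intro t ht
  have hdist : qc * ‖y t - ystar t‖ ≤ ‖σ t‖ := by
    simpa [hystar t] using
      mul_norm_sub_le_norm_sub_of_hasFDerivAt (hHyy · t) (hstrong · t) (y t) (ystar t)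
  refine ⟨hdecay t ht, ?_⟩
  rw [div_mul_eq_mul_div, le_div_iff₀' hqc]
  exact hdist.trans (hdecay t ht)
end

section
/- Safety under exponential tracking (Theorem 2 structure): let h : R^n → R be a CBF with ‖∇h(x)‖ ≤ b_h on the safe set, let u*(t) satisfy the CBF constraint L_f h(x) + L_g h(x) u* + α h(x) ≥ 0 along a trajectory x(t) of ẋ = f(x) + g(x)u, with u the applied input. Suppose the tracking residual e(t) = ‖∇_y f_u‖ satisfies d/dt e(t) ≤ -γ_hat e(t) and ‖u - u*‖ ≤ e(t)/q_c, with γ_hat > α. Define α' = q_c(γ_hat - α)/b_h and h_N(t) = -e(t) + α' h(x(t)). Then ḣ_N(t) ≥ -α h_N(t), and hence if h_N(t₀) ≥ 0 the system remains safe: h(x(t)) ≥ 0 for all t ≥ t₀. -/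
open scoped RealInnerProductSpace

/-!
Along the trajectory, the Lie derivative of `h` under the applied input differs from the one
under `u*` by at most `b_h ‖u - u*‖ ≤ b_h e / q_c`, so the CBF constraint for `u*` gives
`ḣ ≥ -α h - b_h e / q_c`. The weight `α' = q_c (γ̂ - α) / b_h` is chosen so that the decay
`ė ≤ -γ̂ e` of the residual exactly absorbs this error, leaving `ḣ_N ≥ -α h_N`. Then
`exp (α t) h_N(t)` is nondecreasing, so `h_N` stays nonnegative, and `α' h ≥ e ≥ 0` gives safety.
-/

theorem HasGradientAt.comp_hasDerivAt {F : Type*} [NormedAddCommGroup F] [InnerProductSpace ℝ F]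
    [CompleteSpace F] {φ : F → ℝ} {p : F} {x : ℝ → F} {v : F} {t : ℝ}
    (hφ : HasGradientAt φ p (x t)) (hx : HasDerivAt x v t) :
    HasDerivAt (fun s => φ (x s)) ⟪p, v⟫ t := by
  simpa [InnerProductSpace.toDual_apply_apply, Function.comp_def] using
    hφ.hasFDerivAt.comp_hasDerivAt t hx

theorem nonneg_of_neg_mul_le_deriv {φ φ' : ℝ → ℝ} {α t0 : ℝ}
    (hφ : ∀ t, t0 ≤ t → HasDerivAt φ (φ' t) t) (hbound : ∀ t, t0 ≤ t → -α * φ t ≤ φ' t)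
    (h0 : 0 ≤ φ t0) : ∀ t, t0 ≤ t → 0 ≤ φ t := by
  intro t ht
  have hF : ∀ s, t0 ≤ s → HasDerivAt (fun r => Real.exp (α * r) * φ r)
      (Real.exp (α * s) * (α * φ s + φ' s)) s := by
    intro s hs
    have hexp : HasDerivAt (fun r => Real.exp (α * r)) (Real.exp (α * s) * α) s :=
      ((hasDerivAt_id s).const_mul α).exp.congr_deriv (by simp)
    exact (hexp.mul (hφ s hs)).congr_deriv (by ring)
  have hmono : MonotoneOn (fun r => Real.exp (α * r) * φ r) (Set.Ici t0) := by
    refine monotoneOn_of_hasDerivWithinAt_nonneg (convex_Ici t0)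
      (fun s hs => (hF s hs).continuousAt.continuousWithinAt)
      (fun s hs => (hF s (le_of_lt (by simpa using hs))).hasDerivWithinAt) ?_
    intro s hs
    have hs : t0 ≤ s := le_of_lt (by simpa using hs)
    exact mul_nonneg (Real.exp_pos _).le (by linarith [hbound s hs])
  have hexp_mul : 0 ≤ Real.exp (α * t) * φ t :=
    (mul_nonneg (Real.exp_pos _).le h0).trans (hmono Set.self_mem_Ici ht ht)
  exact (mul_nonneg_iff_of_pos_left (Real.exp_pos _)).mp hexp_mul

theorem neg_mul_sub_le_inner_of_cbf {E U : Type*} [NormedAddCommGroup E] [InnerProductSpace ℝ E]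
    [NormedAddCommGroup U] [NormedSpace ℝ U] {p f : E} {G : U →L[ℝ] E} {u v : U} {α hx bh r : ℝ}
    (hbh : 0 ≤ bh) (hcbf : 0 ≤ ⟪p, f + G v⟫ + α * hx)
    (hLg : |⟪p, G (u - v)⟫| ≤ bh * ‖u - v‖) (htrack : ‖u - v‖ ≤ r) :
    -α * hx - bh * r ≤ ⟪p, f + G u⟫ := by
  have hsplit : ⟪p, f + G u⟫ = ⟪p, f + G v⟫ + ⟪p, G (u - v)⟫ := by
    rw [map_sub, ← inner_add_right]
    abel_nf
  have herr : -(bh * r) ≤ ⟪p, G (u - v)⟫ :=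
    (neg_le_neg (hLg.trans (mul_le_mul_of_nonneg_left htrack hbh))).trans (neg_abs_le _)
  linarith

theorem neg_mul_augmented_le {α γ qc bh e de hx dh : ℝ} (hγα : α < γ) (hqc : 0 < qc)
    (hbh : 0 < bh) (hde : de ≤ -γ * e) (hdh : -α * hx - bh * (e / qc) ≤ dh) :
    -α * (-e + qc * (γ - α) / bh * hx) ≤ -de + qc * (γ - α) / bh * dh := by
  have hc : 0 ≤ qc * (γ - α) / bh := by have := sub_pos.mpr hγα; positivity
  have hcancel : qc * (γ - α) / bh * (bh * (e / qc)) = (γ - α) * e := by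
    field_simp
  calc -α * (-e + qc * (γ - α) / bh * hx)
      = γ * e + qc * (γ - α) / bh * (-α * hx - bh * (e / qc)) := by
        linear_combination hcancel
    _ ≤ -de + qc * (γ - α) / bh * dh := by
        gcongr
        linarith

theorem safety_under_exponential_tracking_general (n k : ℕ) (t0 α γ qc bh : ℝ)
    (hγα : α < γ) (hqc : 0 < qc) (hbh : 0 < bh)
    (h : EuclideanSpace ℝ (Fin n) → ℝ) (hhdiff : Differentiable ℝ h)
    (f : EuclideanSpace ℝ (Fin n) → EuclideanSpace ℝ (Fin n))
    (g : EuclideanSpace ℝ (Fin n) →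
      (EuclideanSpace ℝ (Fin k) →L[ℝ] EuclideanSpace ℝ (Fin n)))
    (x : ℝ → EuclideanSpace ℝ (Fin n))
    (u ustar : ℝ → EuclideanSpace ℝ (Fin k))
    (hdyn : ∀ t, t0 ≤ t → HasDerivAt x (f (x t) + g (x t) (u t)) t)
    (hcbf : ∀ t, t0 ≤ t →
      0 ≤ ⟪gradient h (x t), f (x t) + g (x t) (ustar t)⟫ + α * h (x t))
    (hLg : ∀ t, t0 ≤ t →
      |⟪gradient h (x t), g (x t) (u t - ustar t)⟫| ≤ bh * ‖u t - ustar t‖)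
    (e : ℝ → ℝ) (henonneg : ∀ t, 0 ≤ e t)
    (hediff : ∀ t, t0 ≤ t → DifferentiableAt ℝ e t)
    (hedecay : ∀ t, t0 ≤ t → deriv e t ≤ -γ * e t)
    (htrack : ∀ t, t0 ≤ t → ‖u t - ustar t‖ ≤ e t / qc) :
    (∀ t, t0 ≤ t →
      -α * (-e t + (qc * (γ - α) / bh) * h (x t)) ≤
        deriv (fun s => -e s + (qc * (γ - α) / bh) * h (x s)) t) ∧
    (0 ≤ -e t0 + (qc * (γ - α) / bh) * h (x t0) →
      ∀ t, t0 ≤ t → 0 ≤ h (x t)) := by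
  set c := qc * (γ - α) / bh
  have hderiv : ∀ t, t0 ≤ t → HasDerivAt (fun s => -e s + c * h (x s))
      (-deriv e t + c * ⟪gradient h (x t), f (x t) + g (x t) (u t)⟫) t := fun t ht =>
    (hediff t ht).hasDerivAt.neg.add
      (((hhdiff (x t)).hasGradientAt.comp_hasDerivAt (hdyn t ht)).const_mul c)
  have hbound : ∀ t, t0 ≤ t → -α * (-e t + c * h (x t)) ≤
      -deriv e t + c * ⟪gradient h (x t), f (x t) + g (x t) (u t)⟫ := fun t ht =>
    neg_mul_augmented_le hγα hqc hbh (hedecay t ht)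
      (neg_mul_sub_le_inner_of_cbf hbh.le (hcbf t ht) (hLg t ht) (htrack t ht))
  refine ⟨fun t ht => (hderiv t ht).deriv ▸ hbound t ht, fun h0 t ht => ?_⟩
  have hN := nonneg_of_neg_mul_le_deriv hderiv hbound h0 t ht
  have hc : 0 < c := div_pos (mul_pos hqc (sub_pos.mpr hγα)) hbh
  exact (mul_nonneg_iff_of_pos_left hc).mp (by linarith [henonneg t])

/-- Safety under exponential tracking (Theorem 2): with CBF `h` having bounded
gradient, an optimal input `u*` satisfying the CBF constraint along the
trajectory of `ẋ = f(x) + g(x)u`, a tracking residual `e` decaying as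
`ė ≤ -γ̂ e` with `‖u - u*‖ ≤ e/q_c` and `γ̂ > α`, the augmented barrier
`h_N = -e + α' h(x)` with `α' = q_c(γ̂ - α)/b_h` satisfies `ḣ_N ≥ -α h_N`;
hence `h_N(t₀) ≥ 0` implies `h(x(t)) ≥ 0` for all `t ≥ t₀`. -/
theorem safety_under_exponential_tracking (n k : ℕ) (t0 α γ qc bh : ℝ)
    (hα : 0 < α) (hγα : α < γ) (hqc : 0 < qc) (hbh : 0 < bh)
    (h : EuclideanSpace ℝ (Fin n) → ℝ) (hhdiff : Differentiable ℝ h)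
    (hgrad : ∀ x, 0 ≤ h x → ‖gradient h x‖ ≤ bh)
    (f : EuclideanSpace ℝ (Fin n) → EuclideanSpace ℝ (Fin n))
    (g : EuclideanSpace ℝ (Fin n) →
      (EuclideanSpace ℝ (Fin k) →L[ℝ] EuclideanSpace ℝ (Fin n)))
    (x : ℝ → EuclideanSpace ℝ (Fin n))
    (u ustar : ℝ → EuclideanSpace ℝ (Fin k))
    (hdyn : ∀ t, t0 ≤ t → HasDerivAt x (f (x t) + g (x t) (u t)) t)
    (hcbf : ∀ t, t0 ≤ t →
      0 ≤ ⟪gradient h (x t), f (x t) + g (x t) (ustar t)⟫ + α * h (x t))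
    (hLg : ∀ t, t0 ≤ t →
      |⟪gradient h (x t), g (x t) (u t - ustar t)⟫| ≤ bh * ‖u t - ustar t‖)
    (e : ℝ → ℝ) (henonneg : ∀ t, 0 ≤ e t)
    (hediff : ∀ t, t0 ≤ t → DifferentiableAt ℝ e t)
    (hedecay : ∀ t, t0 ≤ t → deriv e t ≤ -γ * e t)
    (htrack : ∀ t, t0 ≤ t → ‖u t - ustar t‖ ≤ e t / qc) :
    (∀ t, t0 ≤ t →
      -α * (-e t + (qc * (γ - α) / bh) * h (x t)) ≤
        deriv (fun s => -e s + (qc * (γ - α) / bh) * h (x s)) t) ∧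
    (0 ≤ -e t0 + (qc * (γ - α) / bh) * h (x t0) →
      ∀ t, t0 ≤ t → 0 ≤ h (x t)) :=
  safety_under_exponential_tracking_general n k t0 α γ qc bh hγα hqc hbh h hhdiff f g x u ustar hdyn
    hcbf hLg e henonneg hediff hedecay htrack
end
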